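/- Let L be a finite meet-distributive meet-semilattice with join-irreducibles P, and let α ∈ L with |N(α)| = i lower neighbors. Then for each k, the number of subsets A ⊆ ℓ(α) with |A| = k such that A ⊄ ℓ(q) for every q ∈ L with q < α equals the binomial coefficient C(|ℓ(α)| − i, k − i). -/

import Mathlib

/-!
Meet-distributivity makes `[lowMeet α, α]` Boolean, so two distinct lower covers `r, s` of `α`
have join `α` and satisfy `r ⊓ s ⋖ s`. A minimal element of `{x ≤ α | ¬ x ≤ r}` then has only
one lower cover, so `ℓ(α) \ ℓ(r)` is nonempty for every lower cover `r`. By well-founded induction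
on `α` it is a singleton `{q_r}`, and distinct covers give disjoint such sets: a join-irreducible
avoiding two covers `r, r'` lies below a third cover `s`, where the covers `r ⊓ s`, `r' ⊓ s` of `s`
contradict uniqueness. Hence `S(α)`, the disjoint union of the `{q_r}`, has `|N(α)|` elements,
`A ⊆ ℓ(α)` lies in no `ℓ(q)` with `q < α` exactly when `S(α) ⊆ A`, and it remains to count the
`k`-subsets of `ℓ(α)` containing `S(α)`.
-/

open scoped Classical

/-- An element of a poset is *join-irreducible* if it covers exactly one element. -/
def JoinIrred {L : Type*} [Preorder L] (a : L) : Prop := ∃! b : L, b ⋖ a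

/-- `ell α = {p ∈ P : p ≤ α}`, the set of join-irreducible elements below `α`. -/
def ell {L : Type*} [Preorder L] (a : L) : Set L := {p | JoinIrred p ∧ p ≤ a}

/-- The set of join-irreducible elements. -/
def Pset (L : Type*) [Preorder L] : Set L := {p | JoinIrred p}

/-- The set `N(α)` of lower neighbors of `α`, as a finset. -/
noncomputable def NF {L : Type*} [Preorder L] [Fintype L] (a : L) : Finset L :=
  Finset.univ.filter (fun b => b ⋖ a)

/-- `ell` as a finset. -/
noncomputable def ellF {L : Type*} [Preorder L] [Fintype L] (a : L) : Finset L :=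
  Finset.univ.filter (fun p => JoinIrred p ∧ p ≤ a)

/-- `α' = ⋀ N(α)`, the meet of all lower neighbors of `α` (with `α' = α` if `N(α) = ∅`). -/
noncomputable def lowMeet {L : Type*} [SemilatticeInf L] [Fintype L] (a : L) : L :=
  if h : (NF a).Nonempty then (NF a).inf' h id else a

/-- `S(α) = ℓ(α) \ ℓ(α')`. -/
noncomputable def SF {L : Type*} [SemilatticeInf L] [Fintype L] (a : L) : Finset L :=
  ellF a \ ellF (lowMeet a)

/-- An interval `[γ, β]` is Boolean if it is order-isomorphic to some `2^[k]`. -/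
def IsBooleanInterval {L : Type*} [Preorder L] (γ β : L) : Prop :=
  ∃ k : ℕ, Nonempty ((Set.Icc γ β) ≃o Set (Fin k))

/-- A poset is meet-distributive if each interval `[γ, β]` such that `γ` is the meet of
the lower neighbors of `β` in `[γ, β]` is Boolean. -/
def MeetDistributive (L : Type*) [Preorder L] : Prop :=
  ∀ γ β : L, γ ≤ β → IsGLB {x | γ ≤ x ∧ x ⋖ β} γ → IsBooleanInterval γ β

/-- A pair `(A, B)` of subsets of `P` is independent if each `α` with `B ⊆ ℓ(α)`
satisfies `A ∩ ℓ(α) ≠ ∅`. -/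
def Indep {L : Type*} [Preorder L] (A B : Set L) : Prop :=
  ∀ α : L, B ⊆ ell α → (A ∩ ell α).Nonempty

/-- `⟨B⟩`, the poset ideal of `P` generated by `B ⊆ P`. -/
def idealGen {L : Type*} [Preorder L] (B : Set L) : Set L :=
  {p | JoinIrred p ∧ ∃ q ∈ B, p ≤ q}

/-- `M(B)`, the set of maximal elements of `B`. -/
def maxElems {L : Type*} [Preorder L] (B : Set L) : Set L :=
  {b ∈ B | ∀ c ∈ B, b ≤ c → c = b}

section DistribLattice

variable {B : Type*} {a b c d : B}

theorem inf_covBy_of_covBy_of_ne [Lattice B] [IsLowerModularLattice B]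
    (hac : a ⋖ c) (hbc : b ⋖ c) (hab : a ≠ b) : a ⊓ b ⋖ b :=
  inf_covBy_of_covBy_sup_left (by rwa [hac.wcovBy.sup_eq hbc.wcovBy hab])

theorem eq_of_inf_eq_of_covBy [DistribLattice B] (hac : a ⋖ c) (hbc : b ⋖ c) (hdc : d ⋖ c)
    (hab : a ≠ b) (hdb : d ≠ b) (h : a ⊓ b = d ⊓ b) : a = d :=
  eq_of_inf_eq_sup_eq h <| by
    rw [hac.wcovBy.sup_eq hbc.wcovBy hab, hdc.wcovBy.sup_eq hbc.wcovBy hdb]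

end DistribLattice

theorem Set.Icc.coe_covBy_coe {α : Type*} [Preorder α] {a b : α} {x y : Set.Icc a b} :
    (x : α) ⋖ y ↔ x ⋖ y :=
  Set.OrdConnected.apply_covBy_apply_iff (OrderEmbedding.subtype (· ∈ Set.Icc a b)) <| by
    rw [OrderEmbedding.coe_subtype, Subtype.range_coe]; exact Set.ordConnected_Icc

theorem OrderIso.apply_covBy_apply_of_covBy {L B : Type*} [Preorder L] [Preorder B] {γ α r : L}
    (e : Set.Icc γ α ≃o B) (hr : r ⋖ α) (hγr : γ ≤ r) :
    e ⟨r, hγr, hr.le⟩ ⋖ e ⟨α, hγr.trans hr.le, le_rfl⟩ :=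
  (apply_covBy_apply_iff e).2 (Set.Icc.coe_covBy_coe.1 hr)

section MeetSemilattice

variable {L : Type*} [SemilatticeInf L] [Fintype L] {α β r r' s t p u : L}

@[simp]
theorem mem_ellF : p ∈ ellF α ↔ JoinIrred p ∧ p ≤ α := by
  simp [ellF]

@[simp]
theorem mem_NF : r ∈ NF α ↔ r ⋖ α := by
  simp [NF]

theorem mem_sdiff_ellF : p ∈ ellF α \ ellF r ↔ JoinIrred p ∧ p ≤ α ∧ ¬ p ≤ r := by
  simp +contextual [and_assoc]

theorem ellF_mono (h : α ≤ β) : ellF α ⊆ ellF β := fun _ hp => by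
  rw [mem_ellF] at hp ⊢
  exact ⟨hp.1, hp.2.trans h⟩

theorem lowMeet_le_of_covBy (hr : r ⋖ α) : lowMeet α ≤ r := by
  rw [lowMeet, dif_pos ⟨r, mem_NF.2 hr⟩]
  exact Finset.inf'_le _ (mem_NF.2 hr)

theorem le_lowMeet_iff (hp : p ≤ α) : p ≤ lowMeet α ↔ ∀ r, r ⋖ α → p ≤ r := by
  refine ⟨fun h r hr => h.trans (lowMeet_le_of_covBy hr), fun h => ?_⟩
  rw [lowMeet]
  split_ifs with hne
  · exact Finset.le_inf' _ _ fun r hr => h r (mem_NF.1 hr)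
  · exact hp

theorem isGLB_lowMeet (hr : r ⋖ α) : IsGLB {x | lowMeet α ≤ x ∧ x ⋖ α} (lowMeet α) :=
  ⟨fun _ hx => hx.1, fun _ hb =>
    (le_lowMeet_iff ((hb ⟨lowMeet_le_of_covBy hr, hr⟩).trans hr.le)).2
      fun _ hs => hb ⟨lowMeet_le_of_covBy hs, hs⟩⟩

theorem JoinIrred.le_of_lt_of_covBy (hp : JoinIrred p) (hr : r ⋖ p) (hu : u < p) : u ≤ r := by
  obtain ⟨s, hus, hs⟩ := exists_le_covBy_of_lt hu
  exact hp.unique hs hr ▸ hus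

theorem JoinIrred.eq_of_mem_sdiff_ellF (hα : JoinIrred α) (hr : r ⋖ α)
    (hp : p ∈ ellF α \ ellF r) : p = α := by
  obtain ⟨-, hpα, hpr⟩ := mem_sdiff_ellF.1 hp
  exact hpα.eq_of_not_lt fun hlt => hpr (hα.le_of_lt_of_covBy hr hlt)

namespace MeetDistributive

theorem isBooleanInterval_lowMeet (h : MeetDistributive L) (hr : r ⋖ α) :
    IsBooleanInterval (lowMeet α) α :=
  h _ _ ((lowMeet_le_of_covBy hr).trans hr.le) (isGLB_lowMeet hr)

theorem inf_covBy (h : MeetDistributive L) (hr : r ⋖ α) (hs : s ⋖ α) (hrs : r ≠ s) :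
    r ⊓ s ⋖ s := by
  obtain ⟨m, ⟨e⟩⟩ := h.isBooleanInterval_lowMeet hr
  have hcov := inf_covBy_of_covBy_of_ne (e.apply_covBy_apply_of_covBy hr (lowMeet_le_of_covBy hr))
    (e.apply_covBy_apply_of_covBy hs (lowMeet_le_of_covBy hs))
    (e.injective.ne (ne_of_apply_ne Subtype.val hrs))
  rw [← e.map_inf, apply_covBy_apply_iff e, ← Set.Icc.coe_covBy_coe] at hcov
  exact hcov

theorem le_of_covBy_of_covBy (h : MeetDistributive L) (hr : r ⋖ α) (hs : s ⋖ α) (hrs : r ≠ s)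
    (hru : r ≤ u) (hsu : s ≤ u) : α ≤ u := by
  obtain ⟨m, ⟨e⟩⟩ := h.isBooleanInterval_lowMeet hr
  have hγr := lowMeet_le_of_covBy hr
  have hsup := (e.apply_covBy_apply_of_covBy hr hγr).wcovBy.sup_eq
    (e.apply_covBy_apply_of_covBy hs (lowMeet_le_of_covBy hs)).wcovBy
    (e.injective.ne (ne_of_apply_ne Subtype.val hrs))
  have hα : (⟨α, hγr.trans hr.le, le_rfl⟩ : Set.Icc (lowMeet α) α) ≤
      ⟨u ⊓ α, le_inf (hγr.trans hru) (hγr.trans hr.le), inf_le_right⟩ := by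
    rw [← e.le_iff_le, ← hsup]
    exact sup_le (e.monotone (le_inf hru hr.le)) (e.monotone (le_inf hsu hs.le))
  exact (le_inf_iff.1 hα).1

theorem eq_of_inf_eq (h : MeetDistributive L) (hr : r ⋖ α) (hs : s ⋖ α) (ht : t ⋖ α)
    (hrs : r ≠ s) (hts : t ≠ s) (heq : r ⊓ s = t ⊓ s) : r = t := by
  obtain ⟨m, ⟨e⟩⟩ := h.isBooleanInterval_lowMeet hr
  refine congrArg Subtype.val <| e.injective <| eq_of_inf_eq_of_covBy
    (e.apply_covBy_apply_of_covBy hr (lowMeet_le_of_covBy hr))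
    (e.apply_covBy_apply_of_covBy hs (lowMeet_le_of_covBy hs))
    (e.apply_covBy_apply_of_covBy ht (lowMeet_le_of_covBy ht))
    (e.injective.ne (ne_of_apply_ne Subtype.val hrs))
    (e.injective.ne (ne_of_apply_ne Subtype.val hts)) ?_
  rw [← e.map_inf, ← e.map_inf]
  exact congrArg e (Subtype.ext heq)

theorem exists_mem_sdiff_ellF (h : MeetDistributive L) (hr : r ⋖ α) :
    (ellF α \ ellF r).Nonempty := by
  obtain ⟨p, -, ⟨hpα, hpr⟩, hmin⟩ := exists_minimal_le_of_wellFoundedLT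
    (fun x => x ≤ α ∧ ¬ x ≤ r) α ⟨le_rfl, hr.lt.not_ge⟩
  have hbelow : ∀ c < p, c ≤ r := fun c hc =>
    by_contra fun hcr => hc.not_ge (hmin ⟨hc.le.trans hpα, hcr⟩ hc.le)
  obtain ⟨c, -, hc⟩ := exists_le_covBy_of_lt
    (inf_le_left.lt_of_ne fun heq => hpr (inf_eq_left.1 heq) : p ⊓ r < p)
  have hpJ : JoinIrred p := ⟨c, hc, fun c' hc' => by_contra fun hne =>
    hpr (h.le_of_covBy_of_covBy hc' hc hne (hbelow c' hc'.lt) (hbelow c hc.lt))⟩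
  exact ⟨p, mem_sdiff_ellF.2 ⟨hpJ, hpα, hpr⟩⟩

theorem disjoint_sdiff_ellF_of_forall_lt (h : MeetDistributive L)
    (ih : ∀ s < α, ∀ t, t ⋖ s → (ellF s \ ellF t).card ≤ 1)
    (hr : r ⋖ α) (hr' : r' ⋖ α) (hrr' : r ≠ r') :
    Disjoint (ellF α \ ellF r) (ellF α \ ellF r') := by
  rw [Finset.disjoint_left]
  intro q hq hq'
  obtain ⟨hqJ, hqα, hqr⟩ := mem_sdiff_ellF.1 hq
  have hqr' := (mem_sdiff_ellF.1 hq').2.2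
  have hqlt : q < α := hqα.lt_of_ne fun hqα => hrr' (hqJ.unique (hqα ▸ hr) (hqα ▸ hr'))
  obtain ⟨s, hqs, hs⟩ := exists_le_covBy_of_lt hqlt
  have hsr : r ≠ s := fun e => hqr (e ▸ hqs)
  have hsr' : r' ≠ s := fun e => hqr' (e ▸ hqs)
  have hrs := h.inf_covBy hr hs hsr
  have hr's := h.inf_covBy hr' hs hsr'
  have hne : r ⊓ s ≠ r' ⊓ s := fun e => hrr' (h.eq_of_inf_eq hr hs hr' hsr hsr' e)
  -- a join-irreducible below `r' ⊓ s` but not below `r ⊓ s` must be `q`, which is not below `r'`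
  obtain ⟨z, hz⟩ := h.exists_mem_sdiff_ellF (h.inf_covBy hrs hr's hne)
  obtain ⟨hzJ, hzr's, hzrr's⟩ := mem_sdiff_ellF.1 hz
  have hzq : z = q := Finset.card_le_one.1 (ih s hs.lt _ hrs) z
    (mem_sdiff_ellF.2 ⟨hzJ, hzr's.trans inf_le_right, fun hzrs => hzrr's (le_inf hzrs hzr's)⟩) q
    (mem_sdiff_ellF.2 ⟨hqJ, hqs, fun hqrs => hqr (hqrs.trans inf_le_left)⟩)
  exact hqr' (hzq ▸ hzr's.trans inf_le_left)

theorem card_sdiff_ellF_le_one (h : MeetDistributive L) (hr : r ⋖ α) :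
    (ellF α \ ellF r).card ≤ 1 := by
  induction α using WellFoundedLT.induction generalizing r with
  | ind α ih =>
  rw [Finset.card_le_one]
  intro p hp p' hp'
  by_cases hα : JoinIrred α
  · exact (hα.eq_of_mem_sdiff_ellF hr hp).trans (hα.eq_of_mem_sdiff_ellF hr hp').symm
  obtain ⟨hpJ, hpα, hpr⟩ := mem_sdiff_ellF.1 hp
  obtain ⟨hp'J, hp'α, hp'r⟩ := mem_sdiff_ellF.1 hp'
  obtain ⟨r', hpr', hr'⟩ := exists_le_covBy_of_lt (hpα.lt_of_ne fun e => hα (e ▸ hpJ))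
  have hrr' : r ≠ r' := fun e => hpr (e ▸ hpr')
  have hp'r' : p' ≤ r' := by_contra fun hp'r' =>
    Finset.disjoint_left.1 (h.disjoint_sdiff_ellF_of_forall_lt
      (fun s hs _ ht => ih s hs ht) hr hr' hrr') hp' (mem_sdiff_ellF.2 ⟨hp'J, hp'α, hp'r'⟩)
  exact Finset.card_le_one.1 (ih r' hr'.lt (h.inf_covBy hr hr' hrr')) p
    (mem_sdiff_ellF.2 ⟨hpJ, hpr', fun hp => hpr (hp.trans inf_le_left)⟩) p'
    (mem_sdiff_ellF.2 ⟨hp'J, hp'r', fun hp => hp'r (hp.trans inf_le_left)⟩)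

theorem disjoint_sdiff_ellF (h : MeetDistributive L) (hr : r ⋖ α) (hr' : r' ⋖ α)
    (hrr' : r ≠ r') : Disjoint (ellF α \ ellF r) (ellF α \ ellF r') :=
  h.disjoint_sdiff_ellF_of_forall_lt (fun _ _ _ ht => h.card_sdiff_ellF_le_one ht) hr hr' hrr'

theorem card_sdiff_ellF (h : MeetDistributive L) (hr : r ⋖ α) : (ellF α \ ellF r).card = 1 :=
  le_antisymm (h.card_sdiff_ellF_le_one hr) (h.exists_mem_sdiff_ellF hr).card_pos

end MeetDistributive

theorem SF_subset_ellF (α : L) : SF α ⊆ ellF α :=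
  Finset.sdiff_subset

theorem SF_eq_biUnion (α : L) : SF α = (NF α).biUnion fun r => ellF α \ ellF r := by
  ext p
  simp only [SF, Finset.mem_biUnion, mem_NF, mem_sdiff_ellF]
  constructor
  · rintro ⟨hpJ, hpα, hp⟩
    rw [le_lowMeet_iff hpα] at hp
    push Not at hp
    obtain ⟨r, hr, hpr⟩ := hp
    exact ⟨r, hr, hpJ, hpα, hpr⟩
  · rintro ⟨r, hr, hpJ, hpα, hpr⟩
    exact ⟨hpJ, hpα, fun hp => hpr (hp.trans (lowMeet_le_of_covBy hr))⟩

namespace MeetDistributive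

theorem card_SF (h : MeetDistributive L) (α : L) : (SF α).card = (NF α).card := by
  rw [SF_eq_biUnion, Finset.card_biUnion fun r hr r' hr' hrr' =>
    h.disjoint_sdiff_ellF (mem_NF.1 hr) (mem_NF.1 hr') hrr', Finset.card_eq_sum_ones]
  exact Finset.sum_congr rfl fun r hr => h.card_sdiff_ellF (mem_NF.1 hr)

theorem forall_lt_not_subset_ellF_iff (h : MeetDistributive L) {A : Finset L}
    (hA : A ⊆ ellF α) : (∀ q, q < α → ¬ A ⊆ ellF q) ↔ SF α ⊆ A := by
  rw [SF_eq_biUnion, Finset.biUnion_subset]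
  constructor
  · intro hA' r hr
    obtain ⟨p, hp⟩ := Finset.card_eq_one.1 (h.card_sdiff_ellF (mem_NF.1 hr))
    rw [hp, Finset.singleton_subset_iff]
    by_contra hpA
    refine hA' r (mem_NF.1 hr).lt fun x hx => by_contra fun hxr => hpA ?_
    have hx' : x ∈ ellF α \ ellF r := Finset.mem_sdiff.2 ⟨hA hx, hxr⟩
    rw [hp, Finset.mem_singleton] at hx'
    exact hx' ▸ hx
  · intro hSA q hq hAq
    obtain ⟨r, hqr, hr⟩ := exists_le_covBy_of_lt hq
    obtain ⟨p, hp⟩ := h.exists_mem_sdiff_ellF hr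
    exact (Finset.mem_sdiff.1 hp).2 (ellF_mono hqr (hAq (hSA r (mem_NF.2 hr) hp)))

end MeetDistributive

end MeetSemilattice

theorem Finset.card_filter_powerset_card_eq_and_subset {α : Type*} (s t : Finset α) (k : ℕ)
    (hts : t ⊆ s) :
    (s.powerset.filter fun A => A.card = k ∧ t ⊆ A).card =
      if t.card ≤ k then (s.card - t.card).choose (k - t.card) else 0 := by
  rw [← Finset.filter_filter, ← Finset.powersetCard_eq_filter]
  split_ifs with htk
  · exact card_filter_powersetCard_subset t s k hts htk
  · rw [card_eq_zero, filter_eq_empty_iff]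
    intro A hA htA
    exact htk ((mem_powersetCard.1 hA).2 ▸ card_le_card htA)

/-- the number of `A ⊆ ℓ(α)` with `|A| = k` contained in no `ℓ(q)`
with `q < α` is `C(|ℓ(α)| − i, k − i)` where `i = |N(α)|`. -/
theorem count_new_faces {L : Type*} [SemilatticeInf L] [Fintype L]
    (h : MeetDistributive L) (α : L) (i k : ℕ) (hi : (NF α).card = i) :
    ((ellF α).powerset.filter
      (fun A => A.card = k ∧ ∀ q : L, q < α → ¬ A ⊆ ellF q)).card =
    if i ≤ k then ((ellF α).card - i).choose (k - i) else 0 := by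
  rw [Finset.filter_congr fun A hA =>
      and_congr_right' (h.forall_lt_not_subset_ellF_iff (Finset.mem_powerset.1 hA)),
    Finset.card_filter_powerset_card_eq_and_subset _ _ _ (SF_subset_ellF α), h.card_SF, hi]
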